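/- arXiv:0808.0418 — 2 statements merged into one kernel-verified Lean document; each statement's English description precedes it below -/
import Mathlib

section
/- If a₁ ≠ a₂ are nonzero integers with (n-1)^{n-1}(a₁^n − a₂^n) = n^n(b₂^{n-1} − b₁^{n-1}) and this common value m is nonzero, then the number of integer pairs (b₁, b₂) satisfying this is at most the number of divisors of m raised to a bounded power, in particular O_ε(|m|^ε). -/
/-!
Put `d = b₂ - b₁`. Since `b₂ - b₁ ∣ b₂^(n-1) - b₁^(n-1)`, every solution has `d ∣ m`, and
`d ≠ 0` because `m ≠ 0`. For fixed `d`, the coordinate `b₁` is a root of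
`nⁿ ((X + d)^(n-1) - X^(n-1)) - m`, a nonzero polynomial (its `X^(n-2)`-coefficient is
`nⁿ (n-1) d`) of degree at most `n - 1`. So there are at most `2 τ(|m|) (n - 1)` solutions.
As `|m| ≥ (n-1)^(n-1) ≥ 2`, we have `τ(|m|) ≥ 2`, which absorbs the factor `2 (n - 1)` into a
power of `τ(|m|)`; the classical divisor bound `τ(N) ≤ C_ε N^ε` gives the second estimate.
-/

open Polynomial Finset Real

namespace Polynomial

variable {R : Type*} [CommRing R]

theorem ncard_setOf_isRoot_le [IsDomain R] {p : R[X]} (hp : p ≠ 0) :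
    {x | p.IsRoot x}.ncard ≤ p.natDegree := by
  classical
  have hroots : {x | p.IsRoot x} = ↑p.roots.toFinset := by ext; simp [mem_roots hp]
  rw [hroots, Set.ncard_coe_finset]
  exact (Multiset.toFinset_card_le _).trans (card_roots' p)

noncomputable def shiftedPowSub (c d m : R) (k : ℕ) : R[X] :=
  C c * ((X + C d) ^ k - X ^ k) - C m

variable {c d m : R} {k : ℕ}

theorem isRoot_shiftedPowSub {x : R} :
    (shiftedPowSub c d m k).IsRoot x ↔ c * ((x + d) ^ k - x ^ k) = m := by
  simp [shiftedPowSub, sub_eq_zero]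

theorem natDegree_shiftedPowSub_le : (shiftedPowSub c d m k).natDegree ≤ k := by
  unfold shiftedPowSub
  compute_degree

theorem coeff_shiftedPowSub_pred (hk : 2 ≤ k) :
    (shiftedPowSub c d m k).coeff (k - 1) = c * (k * d) := by
  simp only [shiftedPowSub, coeff_sub, coeff_C_mul, coeff_X_add_C_pow, coeff_X_pow, coeff_C,
    if_neg (by omega : k - 1 ≠ k), if_neg (by omega : k - 1 ≠ 0),
    Nat.choose_symm_of_eq_add (by omega : k = k - 1 + 1), Nat.choose_one_right,
    (by omega : k - (k - 1) = 1)]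
  ring

theorem shiftedPowSub_ne_zero [NoZeroDivisors R] [CharZero R] (hc : c ≠ 0) (hd : d ≠ 0)
    (hk : 2 ≤ k) :
    shiftedPowSub c d m k ≠ 0 := fun h => by
  have hcoeff := coeff_shiftedPowSub_pred (c := c) (d := d) (m := m) hk
  rw [h, coeff_zero] at hcoeff
  exact mul_ne_zero hc (mul_ne_zero (Nat.cast_ne_zero.2 (by omega)) hd) hcoeff.symm

end Polynomial

theorem Int.card_divisors (z : ℤ) : #z.divisors = 2 * #z.natAbs.divisors := by
  rw [Int.divisors, card_disjUnion, card_map, card_map, two_mul]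

theorem ncard_setOf_mul_pow_sub_pow_eq_le {c m : ℤ} (hc : c ≠ 0) (hm : m ≠ 0) {k : ℕ}
    (hk : 2 ≤ k) : {p : ℤ × ℤ | c * (p.2 ^ k - p.1 ^ k) = m}.ncard ≤ #m.divisors * k := by
  set fiber : ℤ → Set (ℤ × ℤ) :=
    fun d => (fun x => (x, x + d)) '' {x | (shiftedPowSub c d m k).IsRoot x}
  have hsub : {p : ℤ × ℤ | c * (p.2 ^ k - p.1 ^ k) = m} ⊆ ⋃ d ∈ m.divisors, fiber d := by
    rintro ⟨x, y⟩ (h : c * (y ^ k - x ^ k) = m)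
    have hdvd : y - x ∣ m := h ▸ (sub_dvd_pow_sub_pow y x k).mul_left c
    refine Set.mem_biUnion (Int.mem_divisors.2 ⟨hdvd, hm⟩)
      ⟨x, isRoot_shiftedPowSub.2 ?_, by simp⟩
    rwa [add_sub_cancel]
  have hne : ∀ d ∈ m.divisors, shiftedPowSub c d m k ≠ 0 := fun d hd =>
    shiftedPowSub_ne_zero hc (fun h0 => hm (zero_dvd_iff.1 (h0 ▸ Int.dvd_of_mem_divisors hd))) hk
  have hfin : (⋃ d ∈ m.divisors, fiber d).Finite :=
    m.divisors.finite_toSet.biUnion fun d hd => (finite_setOfPred_isRoot (hne d hd)).image _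
  have hfiber : ∀ d ∈ m.divisors, (fiber d).ncard ≤ k := fun d hd => by
    rw [Set.ncard_image_of_injective _ fun x y h => (Prod.ext_iff.1 h).1]
    exact (ncard_setOf_isRoot_le (hne d hd)).trans natDegree_shiftedPowSub_le
  calc _ ≤ (⋃ d ∈ m.divisors, fiber d).ncard := Set.ncard_le_ncard hsub hfin
    _ ≤ ∑ d ∈ m.divisors, (fiber d).ncard := m.divisors.set_ncard_biUnion_le fiber
    _ ≤ ∑ _d ∈ m.divisors, k := sum_le_sum hfiber
    _ = #m.divisors * k := by rw [sum_const, smul_eq_mul]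

theorem add_one_le_exp_div_mul_exp {c : ℝ} (hc : 0 < c) (x : ℝ) :
    x + 1 ≤ exp c / c * exp (c * x) := by
  rw [div_mul_eq_mul_div, le_div_iff₀ hc, ← exp_add]
  nlinarith [add_one_le_exp (c + c * x)]

theorem add_one_le_mul_rpow {ε : ℝ} (hε : 0 < ε) {p : ℝ} (hp : 2 ≤ p) (a : ℕ) :
    (a + 1 : ℝ) ≤ exp (ε * log 2) / (ε * log 2) * p ^ (a * ε) := by
  have hc : 0 < ε * log 2 := mul_pos hε (log_pos one_lt_two)
  calc (a + 1 : ℝ) ≤ exp (ε * log 2) / (ε * log 2) * exp (ε * log 2 * a) :=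
        add_one_le_exp_div_mul_exp hc a
    _ = exp (ε * log 2) / (ε * log 2) * 2 ^ (a * ε) := by
        rw [rpow_def_of_pos two_pos]; ring_nf
    _ ≤ _ := by gcongr

theorem add_one_le_rpow {ε : ℝ} (hε : 0 < ε) {p : ℝ} (hp : 2 ^ ε⁻¹ ≤ p) (a : ℕ) :
    (a + 1 : ℝ) ≤ p ^ (a * ε) := by
  have hp0 : 0 ≤ p := (rpow_nonneg zero_le_two _).trans hp
  have h2 : 2 ≤ p ^ ε :=
    calc (2 : ℝ) = (2 ^ ε⁻¹) ^ ε := by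
          rw [← rpow_mul zero_le_two, inv_mul_cancel₀ hε.ne', rpow_one]
      _ ≤ p ^ ε := by gcongr
  calc (a + 1 : ℝ) ≤ 2 ^ a := by exact_mod_cast Nat.lt_two_pow_self
    _ ≤ (p ^ ε) ^ a := by gcongr
    _ = p ^ (a * ε) := by rw [mul_comm, rpow_mul hp0, rpow_natCast]

theorem Nat.cast_rpow_eq_prod_primeFactors {N : ℕ} (hN : N ≠ 0) (r : ℝ) :
    (N : ℝ) ^ r = ∏ p ∈ N.primeFactors, (p : ℝ) ^ (N.factorization p * r) := by
  conv_lhs =>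
    rw [← Nat.prod_factorization_pow_eq_self hN, Nat.prod_factorization_eq_prod_primeFactors]
  push_cast
  rw [← finsetProd_rpow _ _ fun p _ => by positivity]
  refine prod_congr rfl fun p _ => ?_
  rw [← rpow_natCast, ← rpow_mul (Nat.cast_nonneg p)]

theorem exists_card_divisors_le_mul_rpow {ε : ℝ} (hε : 0 < ε) :
    ∃ C > 0, ∀ N : ℕ, N ≠ 0 → (#N.divisors : ℝ) ≤ C * (N : ℝ) ^ ε := by
  classical
  set B := max 1 (exp (ε * log 2) / (ε * log 2))
  set T : ℝ := 2 ^ ε⁻¹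
  refine ⟨B ^ ⌈T⌉₊, by positivity, fun N hN => ?_⟩
  -- for `p ≥ T` already `a + 1 ≤ p^(aε)`, so `B` is paid only for the primes below `T`
  let w : ℕ → ℝ := fun p => if (p : ℝ) < T then B else 1
  have hlocal : ∀ p ∈ N.primeFactors,
      (N.factorization p + 1 : ℝ) ≤ w p * (p : ℝ) ^ (N.factorization p * ε) := by
    intro p hp
    by_cases hpT : (p : ℝ) < T
    · have hp2 : (2 : ℝ) ≤ p := by exact_mod_cast (Nat.prime_of_mem_primeFactors hp).two_le
      simp only [w, if_pos hpT]
      exact (add_one_le_mul_rpow hε hp2 _).trans (by gcongr; exact le_max_right _ _)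
    · simpa [w, hpT] using add_one_le_rpow hε (not_lt.1 hpT) (N.factorization p)
  have hw : ∏ p ∈ N.primeFactors, w p ≤ B ^ ⌈T⌉₊ := by
    rw [prod_ite, prod_const, prod_const, one_pow, mul_one]
    refine pow_le_pow_right₀ (le_max_left _ _)
      ((card_le_card fun p hp => ?_).trans (card_range _).le)
    simpa [Nat.lt_ceil] using (mem_filter.1 hp).2
  calc (#N.divisors : ℝ) = ∏ p ∈ N.primeFactors, (N.factorization p + 1 : ℝ) := by
        rw [Nat.card_divisors hN]; push_cast; rfl
    _ ≤ ∏ p ∈ N.primeFactors, w p * (p : ℝ) ^ (N.factorization p * ε) :=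
        prod_le_prod (fun _ _ => by positivity) hlocal
    _ = (∏ p ∈ N.primeFactors, w p) * (N : ℝ) ^ ε := by
        rw [prod_mul_distrib, Nat.cast_rpow_eq_prod_primeFactors hN]
    _ ≤ B ^ ⌈T⌉₊ * (N : ℝ) ^ ε := by gcongr

theorem Nat.two_le_card_divisors {N : ℕ} (hN : 2 ≤ N) : 2 ≤ #N.divisors := by
  have h0 : 0 < #N.divisors := Finset.card_pos.2 (Nat.nonempty_divisors.2 (by omega))
  have h1 : #N.divisors ≠ 1 := by rw [Ne, Nat.divisors_card_eq_one_iff]; omega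
  omega

theorem two_mul_mul_le_pow_add_two {t : ℕ} (ht : 2 ≤ t) (k : ℕ) : 2 * t * k ≤ t ^ (k + 2) :=
  calc 2 * t * k ≤ t * t * t ^ k :=
        Nat.mul_le_mul (Nat.mul_le_mul_right t ht)
          (Nat.lt_two_pow_self.le.trans (Nat.pow_le_pow_left ht k))
    _ = t ^ (k + 2) := by ring

/-- Fix `n ≥ 3`. For nonzero integers `a₁ ≠ a₂`, set
`m = (n-1)^(n-1) (a₁^n − a₂^n)` and assume `m ≠ 0`. Then the number of integer pairs
`(b₁, b₂)` with `n^n (b₂^(n-1) − b₁^(n-1)) = m` is at most the number of divisors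
of `m` raised to a bounded power; in particular it is `O_ε(|m|^ε)`. -/
theorem count_pairs_fixed_difference (n : ℕ) (hn : 3 ≤ n) :
    (∃ k : ℕ, ∀ a₁ a₂ m : ℤ, a₁ ≠ 0 → a₂ ≠ 0 → a₁ ≠ a₂ →
        m = ((n : ℤ) - 1) ^ (n - 1) * (a₁ ^ n - a₂ ^ n) → m ≠ 0 →
        Set.ncard {p : ℤ × ℤ | (n : ℤ) ^ n * (p.2 ^ (n - 1) - p.1 ^ (n - 1)) = m}
          ≤ m.natAbs.divisors.card ^ k) ∧
    (∀ ε : ℝ, 0 < ε → ∃ C : ℝ, 0 < C ∧ ∀ a₁ a₂ m : ℤ, a₁ ≠ 0 → a₂ ≠ 0 → a₁ ≠ a₂ →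
        m = ((n : ℤ) - 1) ^ (n - 1) * (a₁ ^ n - a₂ ^ n) → m ≠ 0 →
        (Set.ncard {p : ℤ × ℤ | (n : ℤ) ^ n * (p.2 ^ (n - 1) - p.1 ^ (n - 1)) = m} : ℝ)
          ≤ C * (|m| : ℝ) ^ ε) := by
  have hcount : ∀ m : ℤ, m ≠ 0 →
      Set.ncard {p : ℤ × ℤ | (n : ℤ) ^ n * (p.2 ^ (n - 1) - p.1 ^ (n - 1)) = m}
        ≤ 2 * #m.natAbs.divisors * (n - 1) := fun m hm => by
    rw [← Int.card_divisors]
    exact ncard_setOf_mul_pow_sub_pow_eq_le (pow_ne_zero _ (by omega)) hm (by omega)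
  refine ⟨⟨n + 1, fun a₁ a₂ m _ _ _ hmeq hm => ?_⟩, fun ε hε => ?_⟩
  · have hm2 : (2 : ℤ) ≤ |m| := by
      have hA : (2 : ℤ) ≤ ((n : ℤ) - 1) ^ (n - 1) :=
        (by omega : (2 : ℤ) ≤ n - 1).trans (le_self_pow₀ (by omega) (by omega))
      have hB : 1 ≤ |a₁ ^ n - a₂ ^ n| := Int.one_le_abs (right_ne_zero_of_mul (hmeq ▸ hm))
      rw [hmeq, abs_mul, abs_of_pos (by omega)]
      nlinarith
    have hτ : 2 ≤ #m.natAbs.divisors :=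
      Nat.two_le_card_divisors (by rw [Int.abs_eq_natAbs] at hm2; exact_mod_cast hm2)
    calc _ ≤ 2 * #m.natAbs.divisors * (n - 1) := hcount m hm
      _ ≤ #m.natAbs.divisors ^ (n - 1 + 2) := two_mul_mul_le_pow_add_two hτ _
      _ = #m.natAbs.divisors ^ (n + 1) := by congr 1; omega
  · obtain ⟨C, hC, hτ⟩ := exists_card_divisors_le_mul_rpow hε
    have hn1 : (0 : ℝ) < (n - 1 : ℕ) := by exact_mod_cast (by omega : 0 < n - 1)
    refine ⟨2 * C * (n - 1 : ℕ), by positivity, fun a₁ a₂ m _ _ _ _ hm => ?_⟩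
    calc _ ≤ (2 * #m.natAbs.divisors * (n - 1 : ℕ) : ℝ) := by exact_mod_cast hcount m hm
      _ ≤ 2 * (C * (m.natAbs : ℝ) ^ ε) * (n - 1 : ℕ) := by
          gcongr; exact hτ _ (Int.natAbs_ne_zero.2 hm)
      _ = 2 * C * (n - 1 : ℕ) * |(m : ℝ)| ^ ε := by
          rw [Nat.cast_natAbs, Int.cast_abs]; ring
end

section
/- Assume the abc conjecture. Let n ≥ 5 be odd, δ₀ > 0, and B > A^{1+δ₀} with A sufficiently large. If A ≤ a ≤ 2A, B ≤ |b| ≤ 2B, and gcd((n-1)a, nb) = 1, then T(a,b) and T(-a,b) cannot both be divisible by the square of a prime exceeding B, where T(a,b) = (n-1)^{n-1}a^n + n^n b^{n-1}. -/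
/-- The radical of a natural number: the product of its distinct prime factors. -/
def rad (m : ℕ) : ℕ := ∏ p ∈ m.primeFactors, p

/-- The abc conjecture: for every `ε > 0` there is `C_ε > 0` such that all coprime
positive integers `x + y = z` satisfy `z ≤ C_ε · rad(xyz)^(1+ε)`. -/
def AbcConjecture : Prop :=
  ∀ ε : ℝ, 0 < ε → ∃ C : ℝ, 0 < C ∧ ∀ x y z : ℕ, 0 < x → 0 < y →
    Nat.Coprime x y → x + y = z → (z : ℝ) ≤ C * (rad (x * y * z) : ℝ) ^ (1 + ε)

/-!
Since `n` is odd, `T(a,b) T(-a,b) = z - x` with coprime `x = (n-1)^(2(n-1)) a^(2n)` and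
`z = n^(2n) b^(2(n-1))`. If `p² ∣ T(a,b)` and `q² ∣ T(-a,b)` with `p, q > B`, then
`(pq)² ∣ z - x`, so `rad (z - x) ≤ |z - x| / (pq) < max(x,z) / B²`, while
`rad x · rad z ≤ n² a |b| ≪ A B`. With `M = max(x,z)`, abc gives `M ≪ (A M / B)^(1+ε)`,
i.e. `B^(1+ε) ≪ A^(1+ε) M^ε ≪ A^(1+ε) B^(2nε)`. As `B > A^(1+δ₀)`, this fails for large
`A` once `ε` is small in terms of `δ₀` and `n`.
-/

open UniqueFactorizationMonoid UniqueFactorizationDomain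

section Radical

variable {M : Type*} [CommMonoidWithZero M] [NormalizationMonoid M] [UniqueFactorizationMonoid M]

theorem radical_mul_dvd_of_sq_dvd {m y : M} (h : m ^ 2 ∣ y) : radical y * m ∣ y := by
  obtain ⟨k, rfl⟩ := h
  calc radical (m ^ 2 * k) * m ∣ m * k * m :=
        mul_dvd_mul_right ((radical_mul_dvd.trans (mul_dvd_mul radical_pow_dvd dvd_rfl)).trans
          (mul_dvd_mul radical_dvd_self radical_dvd_self)) m
    _ = m ^ 2 * k := by rw [sq, mul_right_comm]

theorem radical_pow_mul_pow_dvd (c d : M) (i j : ℕ) : radical (c ^ i * d ^ j) ∣ c * d :=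
  radical_mul_dvd.trans <| mul_dvd_mul (radical_pow_dvd.trans radical_dvd_self)
    (radical_pow_dvd.trans radical_dvd_self)

end Radical

theorem Int.radical_pow_mul_pow_le (c d : ℤ) (i j : ℕ) (h : c * d ≠ 0) :
    radical (c ^ i * d ^ j) ≤ |c * d| :=
  Int.le_of_dvd (abs_pos.2 h) ((dvd_abs _ _).2 (radical_pow_mul_pow_dvd c d i j))

theorem rad_eq_radical (m : ℕ) : rad m = radical m := Nat.radical_eq_prod_primeFactors.symm

theorem isCoprime_pow_mul_pow {R : Type*} [CommSemiring R] {c d e f : R}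
    (h : IsCoprime (c * d) (e * f)) (i j k l : ℕ) :
    IsCoprime (c ^ i * d ^ j) (e ^ k * f ^ l) := by
  rw [IsCoprime.mul_left_iff, IsCoprime.mul_right_iff, IsCoprime.mul_right_iff] at h
  exact (h.1.1.pow.mul_right h.1.2.pow).mul_left (h.2.1.pow.mul_right h.2.2.pow)

theorem abs_pow_mul_pow_le {R : Type*} [CommRing R] [LinearOrder R] [IsStrictOrderedRing R]
    {c d S T : R} {i j k : ℕ} (hc : |c| ≤ S) (hd : |d| ≤ T) (hS : 1 ≤ S) (hT : 1 ≤ T)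
    (hi : i ≤ k) (hj : j ≤ k) : |c ^ i * d ^ j| ≤ (S * T) ^ k :=
  calc |c ^ i * d ^ j| = |c| ^ i * |d| ^ j := by rw [abs_mul, abs_pow, abs_pow]
    _ ≤ S ^ i * T ^ j := by gcongr
    _ ≤ S ^ k * T ^ k := by gcongr
    _ = (S * T) ^ k := (mul_pow S T k).symm

theorem AbcConjecture.exists_max_le (habc : AbcConjecture) {ε : ℝ} (hε : 0 < ε) :
    ∃ C : ℝ, 0 < C ∧ ∀ x z : ℤ, 0 < x → 0 < z → x ≠ z → IsCoprime x z →
      ((max x z : ℤ) : ℝ) ≤ C * ((radical (x * z * (z - x)) : ℤ) : ℝ) ^ (1 + ε) := by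
  obtain ⟨C, hC, habcC⟩ := habc ε hε
  refine ⟨C, hC, fun x z hx hz hxz hcop => ?_⟩
  wlog hlt : x < z generalizing x z
  · have := this z x hz hx hxz.symm hcop.symm (by omega)
    rwa [max_comm, mul_comm z, ← neg_sub, mul_neg, radical_neg] at this
  lift x to ℕ using hx.le
  lift z to ℕ using hz.le
  obtain ⟨y, rfl⟩ := Nat.exists_eq_add_of_lt (by exact_mod_cast hlt)
  have hcop' : x.Coprime (y + 1) := by
    rw [← Nat.coprime_self_add_right, ← add_assoc, ← Nat.isCoprime_iff_coprime]
    exact_mod_cast hcop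
  have hxyz : (x : ℤ) * ↑(x + y + 1) * (↑(x + y + 1) - x) =
      ((x * (y + 1) * (x + y + 1) : ℕ) : ℤ) := by
    push_cast; ring
  rw [hxyz, Int.radical_natCast, Int.cast_natCast, max_eq_right hlt.le, ← rad_eq_radical]
  exact_mod_cast habcC x (y + 1) (x + y + 1) (by exact_mod_cast hx) y.succ_pos hcop' (by ring)

theorem AbcConjecture.exists_max_le_of_sq_dvd (habc : AbcConjecture) {ε : ℝ} (hε : 0 < ε) :
    ∃ C : ℝ, 0 < C ∧ ∀ x z m : ℤ, 0 < x → 0 < z → x ≠ z → IsCoprime x z →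
      0 < m → m ^ 2 ∣ z - x → ((max x z : ℤ) : ℝ) ≤
        C * (((radical x * radical z : ℤ) : ℝ) * ((max x z : ℤ) : ℝ) / m) ^ (1 + ε) := by
  obtain ⟨C, hC, habcC⟩ := habc.exists_max_le hε
  refine ⟨C, hC, fun x z m hx hz hxz hcop hm hdvd => (habcC x z hx hz hxz hcop).trans ?_⟩
  have hrx := Int.radical_pos x
  have hrz := Int.radical_pos z
  have hrad : radical (x * z * (z - x)) ≤ radical x * radical z * radical (z - x) :=
    Int.le_of_dvd (by have := Int.radical_pos (z - x); positivity)
      (radical_mul_dvd.trans (mul_dvd_mul_right radical_mul_dvd _))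
  have hdiff : radical (z - x) * m ≤ max x z := by
    have hpos : 0 < |z - x| := abs_pos.2 (sub_ne_zero.2 hxz.symm)
    refine (Int.le_of_dvd hpos ((dvd_abs _ _).2 (radical_mul_dvd_of_sq_dvd hdvd))).trans ?_
    exact abs_sub_le_iff.2 ⟨by grind, by grind⟩
  have hR : ((radical (x * z * (z - x)) : ℤ) : ℝ) ≤
      ((radical x * radical z : ℤ) : ℝ) * ((max x z : ℤ) : ℝ) / m := by
    rw [le_div_iff₀ (by exact_mod_cast hm)]
    calc ((radical (x * z * (z - x)) : ℤ) : ℝ) * m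
        ≤ ((radical x * radical z : ℤ) : ℝ) * ((radical (z - x) * m : ℤ) : ℝ) := by
          push_cast; rw [← mul_assoc]; gcongr; exact_mod_cast hrad
      _ ≤ _ := by gcongr
  gcongr
  exact_mod_cast (Int.radical_pos _).le

open Real Filter in
theorem eventually_mul_rpow_lt {δ K L C : ℝ} {k : ℕ} (hδ : 0 < δ) (hk : 0 < k) (hK : 0 < K)
    (hL : 0 < L) (hC : 0 < C) :
    ∀ᶠ A in atTop, ∀ B M R P : ℝ, A ^ (1 + δ) < B → 0 < M → M ≤ (L * B) ^ k →
      0 < R → R ≤ K * A * B → B * B ≤ P →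
        C * (R * M / P) ^ (1 + δ / ((1 + δ) * k)) < M := by
  set ε := δ / ((1 + δ) * k) with hε_def
  have hε : 0 < ε := by positivity
  -- With this `ε`, `M^ε ≤ (L B)^(kε)` costs exactly `B^(δ/(1+δ))`, and the abc-type bound
  -- leaves a net saving of `B^(δε/(1+δ))`.
  have hεk : (1 + δ) * (ε * k) = δ := by rw [hε_def]; field_simp
  set c := log C + (1 + ε) * log K + ε * k * log L
  refine eventually_atTop.2 ⟨exp (|c| * (1 + δ) / (δ * ε)),
    fun A hA B M R P hAB hM hML hR hRAB hBP => ?_⟩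
  by_contra! habc
  have hA0 : 0 < A := (exp_pos _).trans_le hA
  have hB0 : 0 < B := (rpow_pos_of_pos hA0 _).trans hAB
  have hP : 0 < P := (mul_pos hB0 hB0).trans_le hBP
  have hlogA : |c| * (1 + δ) / (δ * ε) ≤ log A := (le_log_iff_exp_le hA0).2 hA
  have hlogAB : (1 + δ) * log A < log B := by
    rw [← log_rpow hA0]; exact log_lt_log (by positivity) hAB
  have hlogM : log M ≤ k * (log L + log B) := by
    have := log_le_log hM hML
    rwa [log_pow, log_mul hL.ne' hB0.ne'] at this
  have hlogR : log R ≤ log K + log A + log B := by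
    have := log_le_log hR hRAB
    rwa [log_mul (by positivity) hB0.ne', log_mul hK.ne' hA0.ne'] at this
  have hlogP : 2 * log B ≤ log P := by
    have := log_le_log (mul_pos hB0 hB0) hBP
    rwa [log_mul hB0.ne' hB0.ne', ← two_mul] at this
  have hlogabc : log M ≤ log C + (1 + ε) * (log R + log M - log P) := by
    have := log_le_log hM habc
    rwa [log_mul hC.ne' (by positivity), log_rpow (by positivity),
      log_div (by positivity) (by positivity), log_mul hR.ne' hM.ne'] at this
  have hlogB : (1 + ε) * log B ≤ c + (1 + ε) * log A + ε * k * log B := by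
    nlinarith [mul_le_mul_of_nonneg_left hlogM hε.le, mul_le_mul_of_nonneg_left
      (add_le_add hlogR (neg_le_neg hlogP)) (by positivity : 0 ≤ 1 + ε)]
  have hupper : δ * ε * log B < (1 + δ) * c := by
    have hεkB : (1 + δ) * (ε * k) * log B = δ * log B := by rw [hεk]
    nlinarith [mul_le_mul_of_nonneg_left hlogB (by positivity : (0 : ℝ) ≤ 1 + δ),
      mul_lt_mul_of_pos_left hlogAB (by positivity : (0 : ℝ) < 1 + ε)]
  have hlogA0 : 0 ≤ log A := le_trans (by positivity) hlogA
  have hlower : |c| * (1 + δ) ≤ δ * ε * log B := by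
    rw [div_le_iff₀ (by positivity)] at hlogA
    nlinarith [mul_le_mul_of_nonneg_left (by nlinarith : log A ≤ log B)
      (by positivity : 0 ≤ δ * ε)]
  nlinarith [le_abs_self c]

def T (n : ℕ) (a b : ℤ) : ℤ := ((n : ℤ) - 1) ^ (n - 1) * a ^ n + (n : ℤ) ^ n * b ^ (n - 1)

theorem T_mul_T_neg {n : ℕ} (hn : Odd n) (a b : ℤ) :
    T n a b * T n (-a) b =
      (n : ℤ) ^ (2 * n) * b ^ (2 * (n - 1)) - ((n : ℤ) - 1) ^ (2 * (n - 1)) * a ^ (2 * n) := by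
  simp only [T, hn.neg_pow]; ring

theorem max_pow_mul_pow_le {n : ℕ} {a b : ℤ} {B : ℝ} (hn : 1 ≤ n) (hB : 1 ≤ 2 * B)
    (ha : |(a : ℝ)| ≤ 2 * B) (hb : |(b : ℝ)| ≤ 2 * B) :
    ((max (((n : ℤ) - 1) ^ (2 * (n - 1)) * a ^ (2 * n))
      ((n : ℤ) ^ (2 * n) * b ^ (2 * (n - 1))) : ℤ) : ℝ) ≤ (2 * n * B) ^ (2 * n) := by
  have hn' : (1 : ℝ) ≤ n := by exact_mod_cast hn
  have hn1 : |(n : ℝ) - 1| ≤ n := by rw [abs_of_nonneg (by linarith)]; linarith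
  rw [mul_comm 2 (n : ℝ), mul_assoc]
  push_cast
  exact max_le ((le_abs_self _).trans (abs_pow_mul_pow_le hn1 ha hn' hB (by omega) le_rfl))
    ((le_abs_self _).trans
      (abs_pow_mul_pow_le (abs_of_pos (by linarith)).le hb hn' hB le_rfl (by omega)))

theorem radical_mul_radical_le {n : ℕ} {a b : ℤ} {A B : ℝ} (hn : 2 ≤ n) (ha : 0 < a)
    (hb : b ≠ 0) (ha' : (a : ℝ) ≤ 2 * A) (hb' : |(b : ℝ)| ≤ 2 * B) :
    ((radical (((n : ℤ) - 1) ^ (2 * (n - 1)) * a ^ (2 * n)) *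
      radical ((n : ℤ) ^ (2 * n) * b ^ (2 * (n - 1))) : ℤ) : ℝ) ≤ 4 * n ^ 2 * A * B := by
  have hn1 : (0 : ℤ) < n - 1 := by omega
  have hrad : radical (((n : ℤ) - 1) ^ (2 * (n - 1)) * a ^ (2 * n)) *
      radical ((n : ℤ) ^ (2 * n) * b ^ (2 * (n - 1))) ≤ (n - 1) * a * (n * |b|) := by
    calc _ ≤ |((n : ℤ) - 1) * a| * |(n : ℤ) * b| :=
          mul_le_mul (Int.radical_pow_mul_pow_le _ _ _ _ (by positivity))
            (Int.radical_pow_mul_pow_le _ _ _ _ (by positivity)) (Int.radical_pos _).le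
            (abs_nonneg _)
      _ = _ := by rw [abs_mul, abs_mul, abs_of_pos hn1, abs_of_pos ha, Nat.abs_cast]
  calc _ ≤ ((n : ℝ) - 1) * a * (n * |(b : ℝ)|) := by exact_mod_cast hrad
    _ ≤ n * (2 * A) * (n * (2 * B)) := by
        have : (0 : ℝ) < a := by exact_mod_cast ha
        gcongr <;> nlinarith
    _ = 4 * n ^ 2 * A * B := by ring

/-- Assuming abc: for odd `n ≥ 5`, `δ₀ > 0`, `A` sufficiently large and `B > A^(1+δ₀)`,
if `A ≤ a ≤ 2A`, `B ≤ |b| ≤ 2B` and `gcd((n-1)a, nb) = 1`, then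
`T(a,b) = (n-1)^(n-1) a^n + n^n b^(n-1)` and `T(-a,b)` cannot both be divisible by the
square of a prime exceeding `B`. -/
theorem not_both_bad (habc : AbcConjecture) (n : ℕ) (hn : 5 ≤ n) (hodd : Odd n)
    (δ₀ : ℝ) (hδ : 0 < δ₀) :
    ∃ A₀ : ℝ, ∀ A B : ℝ, A₀ ≤ A → A ^ (1 + δ₀) < B → ∀ a b : ℤ,
      A ≤ (a : ℝ) → (a : ℝ) ≤ 2 * A → B ≤ |(b : ℝ)| → |(b : ℝ)| ≤ 2 * B →
      Int.gcd (((n : ℤ) - 1) * a) ((n : ℤ) * b) = 1 →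
      ¬ ((∃ p : ℕ, p.Prime ∧ B < (p : ℝ) ∧
            ((p : ℤ)) ^ 2 ∣ ((n : ℤ) - 1) ^ (n - 1) * a ^ n + (n : ℤ) ^ n * b ^ (n - 1)) ∧
         (∃ q : ℕ, q.Prime ∧ B < (q : ℝ) ∧
            ((q : ℤ)) ^ 2 ∣ ((n : ℤ) - 1) ^ (n - 1) * (-a) ^ n + (n : ℤ) ^ n * b ^ (n - 1))) := by
  obtain ⟨C, hC, habcC⟩ :=
    habc.exists_max_le_of_sq_dvd (ε := δ₀ / ((1 + δ₀) * (2 * n : ℕ))) (by positivity)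
  obtain ⟨A₀, hA₀⟩ := Filter.eventually_atTop.1 <| eventually_mul_rpow_lt (K := 4 * n ^ 2)
    (L := 2 * n) hδ (by omega : 0 < 2 * n) (by positivity) (by positivity) hC
  refine ⟨max A₀ 1, fun A B hA hAB a b ha ha' hb hb' hgcd
    ⟨⟨p, hp, hpB, hpd⟩, q, hq, hqB, hqd⟩ => ?_⟩
  have hA1 : 1 ≤ A := le_of_max_le_right hA
  have hA0 : 0 < A := by linarith
  have hAB' : A ≤ B := (Real.self_le_rpow_of_one_le hA1 (by linarith)).trans hAB.le
  have hB0 : 0 < B := (Real.rpow_pos_of_pos hA0 _).trans hAB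
  have ha0 : 0 < a := by exact_mod_cast (by linarith : (0 : ℝ) < a)
  have hb0 : b ≠ 0 := by rintro rfl; simp at hb; linarith
  set x : ℤ := ((n : ℤ) - 1) ^ (2 * (n - 1)) * a ^ (2 * n)
  set z : ℤ := (n : ℤ) ^ (2 * n) * b ^ (2 * (n - 1))
  have hx : 1 < x :=
    one_lt_mul_of_lt_of_le (one_lt_pow₀ (by omega) (by omega)) (one_le_pow₀ ha0)
  have hz : 0 < z := mul_pos (by positivity) (Even.pow_pos (even_two_mul _) hb0)
  have hcop : IsCoprime x z := isCoprime_pow_mul_pow (Int.isCoprime_iff_gcd_eq_one.2 hgcd) _ _ _ _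
  have hxz : x ≠ z := fun h => by rw [← h, isCoprime_self, Int.isUnit_iff] at hcop; omega
  have hdvd : ((p : ℤ) * q) ^ 2 ∣ z - x := by
    rw [← T_mul_T_neg hodd, mul_pow]; exact mul_dvd_mul hpd hqd
  have hM : (0 : ℝ) < ((max x z : ℤ) : ℝ) := by exact_mod_cast lt_max_of_lt_right hz
  have hR : (0 : ℝ) < ((radical x * radical z : ℤ) : ℝ) := by
    exact_mod_cast mul_pos (Int.radical_pos x) (Int.radical_pos z)
  have hpq : B * B ≤ ((p * q : ℤ) : ℝ) := by push_cast; gcongr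
  refine (hA₀ A (le_of_max_le_left hA) B _ _ _ hAB hM
    (max_pow_mul_pow_le (by omega) (by linarith) (by rw [abs_of_pos (by linarith)]; linarith) hb')
    hR (radical_mul_radical_le (by omega) ha0 hb0 ha' hb') hpq).not_ge
    (habcC x z (p * q) (zero_lt_one.trans hx) hz hxz hcop
      (mul_pos (by exact_mod_cast hp.pos) (by exact_mod_cast hq.pos)) hdvd)
end
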